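/- arXiv:2110.07738 — 2 statements merged into one kernel-verified Lean document; each statement's English description precedes it below -/
import Mathlib

section
/- For ℓ₁, ℓ₂ > 0 and γ > 0, the improper integral I₂ = ∫_{x₁²+x₂² > γ²} dx₁dx₂ / (16π⁴ ℓ₁ℓ₂ ‖(x₁/ℓ₁, x₂/ℓ₂)‖⁴_{ℝ²}) over the exterior of the disk of radius γ equals (ℓ₁² + ℓ₂²)/(32 γ² π³). -/
/-!
In polar coordinates the integrand is `r⁻⁴ g(θ)`, so the integral over `r > γ` factors as
`∫_γ^∞ r⁻³ dr = 1 / (2γ²)` times `∫_{-π}^{π} g`. Up to the constant `(16π⁴ℓ₁ℓ₂)⁻¹`,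
`g(θ) = (cos²θ/ℓ₁² + sin²θ/ℓ₂²)⁻²` has an explicit primitive: a combination of a continuous branch
of `arctan ((ℓ₁/ℓ₂) tan θ)` and of `sin θ cos θ / (ℓ₂² cos²θ + ℓ₁² sin²θ)`. Only the linear term
`θ` of the first survives between `-π` and `π`, giving `π ℓ₁ ℓ₂ (ℓ₁² + ℓ₂²)`.
-/

open Real MeasureTheory

lemma mul_cos_sq_add_mul_sin_sq_pos {a b : ℝ} (ha : 0 < a) (hb : 0 < b) (θ : ℝ) :
    0 < b * cos θ ^ 2 + a * sin θ ^ 2 := by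
  rcases le_total a b with h | h <;>
    nlinarith [sin_sq_add_cos_sq θ, sq_nonneg (sin θ), sq_nonneg (cos θ)]

lemma hasDerivAt_sin_mul_cos_div (a b θ : ℝ) (hD : b * cos θ ^ 2 + a * sin θ ^ 2 ≠ 0) :
    HasDerivAt (fun θ => sin θ * cos θ / (b * cos θ ^ 2 + a * sin θ ^ 2))
      ((b * cos θ ^ 2 - a * sin θ ^ 2) / (b * cos θ ^ 2 + a * sin θ ^ 2) ^ 2) θ := by
  have hnum := (hasDerivAt_sin θ).mul (hasDerivAt_cos θ)
  have hden := (((hasDerivAt_cos θ).pow 2).const_mul b).add (((hasDerivAt_sin θ).pow 2).const_mul a)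
  refine (hnum.div hden hD).congr_deriv ?_
  simp only [Pi.mul_apply, Pi.add_apply, Pi.pow_apply]
  congr 1
  linear_combination (b * cos θ ^ 2 - a * sin θ ^ 2) * sin_sq_add_cos_sq θ

/-- A branch of `arctan ((a / b) tan θ)` that is continuous on all of `ℝ`: by the subtraction
formula for `tan`, the argument of `arctan` here is `tan (θ - arctan ((a / b) tan θ))`. -/
lemma hasDerivAt_id_sub_arctan_sin_mul_cos_div {a b : ℝ} (ha : 0 < a) (hb : 0 < b) (θ : ℝ) :
    HasDerivAt
      (fun θ => θ - arctan ((b - a) * (sin θ * cos θ / (b * cos θ ^ 2 + a * sin θ ^ 2))))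
      (a * b / (b ^ 2 * cos θ ^ 2 + a ^ 2 * sin θ ^ 2)) θ := by
  have hD := mul_cos_sq_add_mul_sin_sq_pos ha hb θ
  have hD₂ := mul_cos_sq_add_mul_sin_sq_pos (pow_pos ha 2) (pow_pos hb 2) θ
  have h := (hasDerivAt_id θ).sub
    ((hasDerivAt_sin_mul_cos_div a b θ hD.ne').const_mul (b - a)).arctan
  refine h.congr_deriv ?_
  have hsc := sin_sq_add_cos_sq θ
  set s := sin θ
  set c := cos θ
  have hu : 1 + ((b - a) * (s * c / (b * c ^ 2 + a * s ^ 2))) ^ 2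
      = (b ^ 2 * c ^ 2 + a ^ 2 * s ^ 2) / (b * c ^ 2 + a * s ^ 2) ^ 2 := by
    field_simp
    linear_combination (b ^ 2 * c ^ 2 + a ^ 2 * s ^ 2) * hsc
  rw [hu]
  field_simp
  linear_combination a * b * hsc

lemma hasDerivAt_primitive_inv_sq_cos_sq_div_add_sin_sq_div {ℓ₁ ℓ₂ : ℝ} (h₁ : 0 < ℓ₁) (h₂ : 0 < ℓ₂)
    (θ : ℝ) :
    HasDerivAt
      (fun θ => ℓ₁ * ℓ₂ * (ℓ₁ ^ 2 + ℓ₂ ^ 2) / 2 *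
          (θ - arctan ((ℓ₂ - ℓ₁) * (sin θ * cos θ / (ℓ₂ * cos θ ^ 2 + ℓ₁ * sin θ ^ 2)))) +
        ℓ₁ ^ 2 * ℓ₂ ^ 2 * (ℓ₁ ^ 2 - ℓ₂ ^ 2) / 2 *
          (sin θ * cos θ / (ℓ₂ ^ 2 * cos θ ^ 2 + ℓ₁ ^ 2 * sin θ ^ 2)))
      ((cos θ ^ 2 / ℓ₁ ^ 2 + sin θ ^ 2 / ℓ₂ ^ 2) ^ 2)⁻¹ θ := by
  have hD := mul_cos_sq_add_mul_sin_sq_pos (pow_pos h₁ 2) (pow_pos h₂ 2) θ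
  refine (((hasDerivAt_id_sub_arctan_sin_mul_cos_div h₁ h₂ θ).const_mul _).add
    ((hasDerivAt_sin_mul_cos_div _ _ θ hD.ne').const_mul _)).congr_deriv ?_
  have hsc := sin_sq_add_cos_sq θ
  set s := sin θ
  set c := cos θ
  have hQ : c ^ 2 / ℓ₁ ^ 2 + s ^ 2 / ℓ₂ ^ 2
      = (ℓ₂ ^ 2 * c ^ 2 + ℓ₁ ^ 2 * s ^ 2) / (ℓ₁ ^ 2 * ℓ₂ ^ 2) := by
    field_simp
  rw [hQ]
  field_simp
  -- `(a - b) (b c² - a s²) + (a + b) (b c² + a s²) = 2ab (c² + s²)` with `a = ℓ₁²`, `b = ℓ₂²`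
  linear_combination 2 * ℓ₁ ^ 2 * ℓ₂ ^ 2 * hsc

lemma integral_inv_sq_cos_sq_div_add_sin_sq_div {ℓ₁ ℓ₂ : ℝ} (h₁ : 0 < ℓ₁) (h₂ : 0 < ℓ₂) :
    ∫ θ in -π..π, ((cos θ ^ 2 / ℓ₁ ^ 2 + sin θ ^ 2 / ℓ₂ ^ 2) ^ 2)⁻¹
      = π * ℓ₁ * ℓ₂ * (ℓ₁ ^ 2 + ℓ₂ ^ 2) := by
  have hQ (θ : ℝ) : 0 < cos θ ^ 2 / ℓ₁ ^ 2 + sin θ ^ 2 / ℓ₂ ^ 2 := by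
    simpa only [div_eq_inv_mul] using
      mul_cos_sq_add_mul_sin_sq_pos (inv_pos.2 (pow_pos h₂ 2)) (inv_pos.2 (pow_pos h₁ 2)) θ
  have hcont : Continuous fun θ => ((cos θ ^ 2 / ℓ₁ ^ 2 + sin θ ^ 2 / ℓ₂ ^ 2) ^ 2)⁻¹ :=
    (by fun_prop : Continuous _).inv₀ fun θ => pow_ne_zero 2 (hQ θ).ne'
  rw [intervalIntegral.integral_eq_sub_of_hasDerivAt
    (fun θ _ => hasDerivAt_primitive_inv_sq_cos_sq_div_add_sin_sq_div h₁ h₂ θ)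
    (hcont.intervalIntegrable _ _)]
  simp only [sin_pi, sin_neg, zero_mul, zero_div, mul_zero, neg_zero, arctan_zero, add_zero,
    sub_zero]
  ring

lemma setIntegral_sq_add_sq_gt_of_rpow_homogeneous {E : Type*} [NormedAddCommGroup E]
    [NormedSpace ℝ E] {s γ : ℝ} (hs : 2 < s) (hγ : 0 < γ) (f : ℝ × ℝ → E) (g : ℝ → E)
    (hf : ∀ r > 0, ∀ θ, f (r * cos θ, r * sin θ) = r ^ (-s) • g θ) :
    ∫ x in {p : ℝ × ℝ | p.1 ^ 2 + p.2 ^ 2 > γ ^ 2}, f x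
      = (γ ^ (2 - s) / (s - 2)) • ∫ θ in -π..π, g θ := by
  set S := {p : ℝ × ℝ | p.1 ^ 2 + p.2 ^ 2 > γ ^ 2}
  have hS : MeasurableSet S := measurableSet_lt measurable_const (by fun_prop)
  have hpolar : ∀ p ∈ polarCoord.target, p.1 • S.indicator f (polarCoord.symm p)
      = (Set.Ioi γ ×ˢ Set.univ).indicator (fun p => p.1 ^ (1 - s) • g p.2) p := by
    rintro ⟨r, θ⟩ ⟨hr, -⟩
    have hr : 0 < r := hr
    have hmem : polarCoord.symm (r, θ) ∈ S ↔ (r, θ) ∈ Set.Ioi γ ×ˢ Set.univ := by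
      have hnorm : (r * cos θ) ^ 2 + (r * sin θ) ^ 2 = r ^ 2 := by
        linear_combination r ^ 2 * cos_sq_add_sin_sq θ
      simp only [S, polarCoord_symm_apply, Set.mem_ofPred_eq, hnorm, Set.mem_prod, Set.mem_Ioi,
        Set.mem_univ, and_true, gt_iff_lt]
      exact pow_lt_pow_iff_left₀ hγ.le hr.le two_ne_zero
    by_cases h : γ < r
    · have hrθ : (r, θ) ∈ Set.Ioi γ ×ˢ Set.univ := ⟨h, trivial⟩
      rw [Set.indicator_of_mem (hmem.2 hrθ), Set.indicator_of_mem hrθ,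
        polarCoord_symm_apply, hf r hr θ, smul_smul, sub_eq_add_neg, rpow_add hr, rpow_one]
    · rw [Set.indicator_of_notMem (fun hm => h (hmem.1 hm).1),
        Set.indicator_of_notMem (fun hm => h hm.1), smul_zero]
  have htarget : polarCoord.target ∩ Set.Ioi γ ×ˢ Set.univ = Set.Ioi γ ×ˢ Set.Ioo (-π) π := by
    rw [show polarCoord.target = Set.Ioi 0 ×ˢ Set.Ioo (-π) π from rfl, Set.prod_inter_prod,
      Set.inter_univ, Set.Ioi_inter_Ioi, sup_eq_right.2 hγ.le]
  rw [← integral_indicator hS, ← integral_comp_polarCoord_symm,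
    setIntegral_congr_fun polarCoord.open_target.measurableSet hpolar,
    setIntegral_indicator (measurableSet_Ioi.prod .univ), htarget, Measure.volume_eq_prod,
    ← Measure.prod_restrict, integral_prod_smul (fun r => r ^ (1 - s)) g,
    integral_Ioi_rpow_of_lt (by linarith) hγ,
    intervalIntegral.integral_of_le (by linarith [pi_pos]),
    integral_Ioc_eq_integral_Ioo, show 1 - s + 1 = 2 - s by ring, neg_div, ← div_neg, neg_sub]

/-- Exact value of the exterior integral `I₂`. -/
theorem stmt6 (ℓ₁ ℓ₂ γ : ℝ) (h1 : 0 < ℓ₁) (h2 : 0 < ℓ₂) (hγ : 0 < γ) :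
    (∫ x in {p : ℝ × ℝ | p.1^2 + p.2^2 > γ^2},
        (16*π^4*ℓ₁*ℓ₂*((x.1/ℓ₁)^2 + (x.2/ℓ₂)^2)^2)⁻¹)
      = (ℓ₁^2 + ℓ₂^2) / (32*γ^2*π^3) := by
  have hpolar : ∀ r > 0, ∀ θ,
      (16 * π ^ 4 * ℓ₁ * ℓ₂ * ((r * cos θ / ℓ₁) ^ 2 + (r * sin θ / ℓ₂) ^ 2) ^ 2)⁻¹
        = r ^ (-4 : ℝ) • ((16 * π ^ 4 * ℓ₁ * ℓ₂)⁻¹ *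
            ((cos θ ^ 2 / ℓ₁ ^ 2 + sin θ ^ 2 / ℓ₂ ^ 2) ^ 2)⁻¹) := by
    intro r hr θ
    rw [rpow_neg hr.le, rpow_ofNat, smul_eq_mul, show (r * cos θ / ℓ₁) ^ 2 + (r * sin θ / ℓ₂) ^ 2
      = r ^ 2 * (cos θ ^ 2 / ℓ₁ ^ 2 + sin θ ^ 2 / ℓ₂ ^ 2) by ring]
    generalize cos θ ^ 2 / ℓ₁ ^ 2 + sin θ ^ 2 / ℓ₂ ^ 2 = Q
    ring
  rw [setIntegral_sq_add_sq_gt_of_rpow_homogeneous (by norm_num) hγ _ _ hpolar,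
    intervalIntegral.integral_const_mul, integral_inv_sq_cos_sq_div_add_sin_sq_div h1 h2,
    show (2 : ℝ) - 4 = -2 by norm_num, rpow_neg hγ.le, rpow_ofNat, smul_eq_mul]
  field_simp
  ring
end

section
/- Let u be a weak solution of the 2D periodic Navier–Stokes equation in variational form with viscosity ν > 0, forcing f ∈ L²(0,∞; H̊), and initial condition u₀ ∈ H̊. Then for all t ≥ s ≥ 0, ‖u(·,t)‖²_{L²} ≤ ‖f‖²_{L²}/(νλ₁)² + e^{-λ₁ν(t-s)}‖u(·,s)‖²_{L²}, where λ₁ = 4π²/max{ℓ₁,ℓ₂}². -/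
open Real Set
open scoped RealInnerProductSpace

/-!
Testing the equation with `φ = u t` kills the trilinear term, and the Poincaré inequality together
with Young's inequality `2 ⟪f, u⟫ ≤ F² / c + c ‖u‖²` (where `c = λ₁ ν`) gives the differential
inequality `d/dt ‖u‖² + c ‖u‖² ≤ F² / c`. Multiplying by the integrating factor `exp (c t)` turns
it into the monotonicity of `exp (c t) (‖u t‖² - F² / c²)`.
-/

theorem le_div_add_exp_mul_sub_of_deriv_add_mul_le {y y' : ℝ → ℝ} {c K s t : ℝ} (hc : c ≠ 0)
    (hy : ∀ x, s ≤ x → HasDerivAt y (y' x) x) (hbound : ∀ x, s ≤ x → y' x + c * y x ≤ K)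
    (hst : s ≤ t) :
    y t ≤ K / c + exp (-c * (t - s)) * (y s - K / c) := by
  set g : ℝ → ℝ := fun x => exp (c * x) * (y x - K / c)
  have hg : ∀ x, s ≤ x → HasDerivAt g (exp (c * x) * (y' x + c * y x - K)) x := by
    intro x hx
    refine (((hasDerivAt_id x).const_mul c).exp.mul ((hy x hx).sub_const (K / c))).congr_deriv ?_
    simp only [id]
    field_simp
    ring
  have hanti : AntitoneOn g (Ici s) := by
    refine antitoneOn_of_hasDerivWithinAt_nonpos (convex_Ici s)
      (f' := fun x => exp (c * x) * (y' x + c * y x - K))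
      (fun x hx => (hg x hx).continuousAt.continuousWithinAt) (fun x hx => ?_) (fun x hx => ?_)
    all_goals rw [interior_Ici] at hx
    · exact (hg x hx.le).hasDerivWithinAt
    · exact mul_nonpos_of_nonneg_of_nonpos (exp_pos _).le (sub_nonpos.2 (hbound x hx.le))
  have hgt : g t ≤ g s := hanti self_mem_Ici hst hst
  have hexp : exp (-c * (t - s)) * exp (c * t) = exp (c * s) := by
    rw [← exp_add]
    ring_nf
  have hpos := exp_pos (c * t)
  rw [← sub_le_iff_le_add', ← mul_le_mul_iff_of_pos_left hpos]
  calc exp (c * t) * (y t - K / c) = g t := rfl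
    _ ≤ g s := hgt
    _ = exp (c * t) * (exp (-c * (t - s)) * (y s - K / c)) := by
      rw [← mul_assoc, mul_comm (exp (c * t)), hexp]

theorem le_div_sq_add_exp_mul_of_deriv_add_mul_le {y y' : ℝ → ℝ} {c F s t : ℝ} (hc : 0 < c)
    (hy : ∀ x, s ≤ x → HasDerivAt y (y' x) x) (hbound : ∀ x, s ≤ x → y' x + c * y x ≤ F ^ 2 / c)
    (hst : s ≤ t) :
    y t ≤ F ^ 2 / c ^ 2 + exp (-c * (t - s)) * y s := by
  have h := le_div_add_exp_mul_sub_of_deriv_add_mul_le hc.ne' hy hbound hst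
  have hK : 0 ≤ F ^ 2 / c / c := by positivity
  rw [div_div, ← sq] at h hK
  nlinarith [exp_pos (-c * (t - s))]

theorem two_mul_le_div_add_mul_sq {c : ℝ} (hc : 0 < c) (F r : ℝ) :
    2 * (F * r) ≤ F ^ 2 / c + c * r ^ 2 := by
  have h : F ^ 2 / c + c * r ^ 2 - 2 * (F * r) = (F - c * r) ^ 2 / c := by
    field_simp
    ring
  linarith [div_nonneg (sq_nonneg (F - c * r)) hc.le]

/-- The energy inequality at a single time: `x = u t`, `v = u' t`, `f = f t`. -/
theorem two_inner_add_mul_norm_sq_le {H : Type*} [NormedAddCommGroup H] [InnerProductSpace ℝ H]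
    {ν lam1 F : ℝ} (hν : 0 ≤ ν) (hc : 0 < lam1 * ν) {v f x : H}
    {a : H → H → ℝ} {b : H → H → H → ℝ}
    (heq : ⟪v, x⟫ + b x x x + ν * a x x = ⟪f, x⟫) (hb : b x x x = 0)
    (hPoin : lam1 * ⟪x, x⟫ ≤ a x x) (hf : ‖f‖ ≤ F) :
    2 * ⟪v, x⟫ + lam1 * ν * ‖x‖ ^ 2 ≤ F ^ 2 / (lam1 * ν) := by
  rw [real_inner_self_eq_norm_sq] at hPoin
  have hforce : ⟪f, x⟫ ≤ F * ‖x‖ :=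
    (real_inner_le_norm f x).trans (mul_le_mul_of_nonneg_right hf (norm_nonneg x))
  have hdiss : ν * (lam1 * ‖x‖ ^ 2) ≤ ν * a x x := mul_le_mul_of_nonneg_left hPoin hν
  nlinarith [two_mul_le_div_add_mul_sq hc F ‖x‖]

theorem stmt9_general {H : Type*} [NormedAddCommGroup H] [InnerProductSpace ℝ H]
    (ℓ₁ ℓ₂ ν F lam1 : ℝ) (hℓ₁ : 0 < ℓ₁) (hν : 0 < ν)
    (hlam1 : lam1 = 4*π^2 / (max ℓ₁ ℓ₂)^2)
    (u u' f : ℝ → H)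
    (a : H → H → ℝ) (b : H → H → H → ℝ)
    (hu : ∀ t, 0 ≤ t → HasDerivAt u (u' t) t)
    (heq : ∀ t, 0 ≤ t → ∀ φ : H,
      ⟪u' t, φ⟫ + b (u t) (u t) φ + ν * a (u t) φ = ⟪f t, φ⟫)
    (hb : ∀ v w : H, b v w w = 0)
    (hPoin : ∀ v : H, lam1 * ⟪v, v⟫ ≤ a v v)
    (hf : ∀ t, 0 ≤ t → ‖f t‖ ≤ F) :
    ∀ s t : ℝ, 0 ≤ s → s ≤ t →
      ‖u t‖^2 ≤ F^2/(ν*lam1)^2 + Real.exp (-lam1*ν*(t-s)) * ‖u s‖^2 := by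
  intro s t hs hst
  have hlam : 0 < lam1 := by
    have hmax : 0 < max ℓ₁ ℓ₂ := lt_max_of_lt_left hℓ₁
    rw [hlam1]
    positivity
  have hc : 0 < lam1 * ν := mul_pos hlam hν
  have hnorm : ∀ x, s ≤ x → HasDerivAt (‖u ·‖ ^ 2) (2 * ⟪u' x, u x⟫) x := fun x hx => by
    simpa only [real_inner_comm] using (hu x (hs.trans hx)).norm_sq
  have henergy : ∀ x, s ≤ x →
      2 * ⟪u' x, u x⟫ + lam1 * ν * ‖u x‖ ^ 2 ≤ F ^ 2 / (lam1 * ν) := fun x hx =>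
    two_inner_add_mul_norm_sq_le hν.le hc (heq x (hs.trans hx) (u x)) (hb _ _) (hPoin _)
      (hf x (hs.trans hx))
  rw [mul_comm ν lam1, neg_mul]
  exact le_div_sq_add_exp_mul_of_deriv_add_mul_le hc hnorm henergy hst

/-- Exponential `L²` energy bound for solutions of the 2D periodic NSE in
abstract variational form. `lam1` is the Poincaré/Stokes constant
`λ₁ = 4π²/max{ℓ₁,ℓ₂}²`. -/
theorem stmt9 {H : Type*} [NormedAddCommGroup H] [InnerProductSpace ℝ H]
    (ℓ₁ ℓ₂ ν F lam1 : ℝ) (hℓ₁ : 0 < ℓ₁) (hℓ₂ : 0 < ℓ₂) (hν : 0 < ν)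
    (hlam1 : lam1 = 4*π^2 / (max ℓ₁ ℓ₂)^2)
    (u u' f : ℝ → H)
    (a : H → H → ℝ) (b : H → H → H → ℝ)
    (hu : ∀ t, 0 ≤ t → HasDerivAt u (u' t) t)
    (heq : ∀ t, 0 ≤ t → ∀ φ : H,
      ⟪u' t, φ⟫ + b (u t) (u t) φ + ν * a (u t) φ = ⟪f t, φ⟫)
    (hb : ∀ v w : H, b v w w = 0)
    (hPoin : ∀ v : H, lam1 * ⟪v, v⟫ ≤ a v v)
    (hf : ∀ t, 0 ≤ t → ‖f t‖ ≤ F) :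
    ∀ s t : ℝ, 0 ≤ s → s ≤ t →
      ‖u t‖^2 ≤ F^2/(ν*lam1)^2 + Real.exp (-lam1*ν*(t-s)) * ‖u s‖^2 :=
  stmt9_general ℓ₁ ℓ₂ ν F lam1 hℓ₁ hν hlam1 u u' f a b hu heq hb hPoin hf
end
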